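/- Let L be a language over an alphabet Σ. Suppose that for every natural number n there exist strings P₁, P₂, P₃, P₄ such that (i) the concatenation w = P₁P₂P₃P₄ belongs to L, (ii) |P₂| ≥ 1, |P₃| ≥ 1, and max(|P₂|, |P₃|) ≥ n, (iii) L has a pump-sensitive linkage (P₁, P₃) on this factorization, and (iv) L has a pump-sensitive linkage (P₂, P₄) on this factorization. Then L is not context-free. -/
import Mathlib


/-- Start position (0-indexed) of segment `i` in the concatenation of the segments `Ps`. -/
def segStart {α : Type} (Ps : List (List α)) (i : ℕ) : ℕ :=
  ((Ps.take i).map List.length).sum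

/-- The set of (0-indexed) positions occupied by segment `i` of the factorization `Ps`. -/
def segRange {α : Type} (Ps : List (List α)) (i : ℕ) : Set ℕ :=
  Set.Ico (segStart Ps i) (segStart Ps i + (Ps.getD i []).length)

/-- The set of positions occupied by the substring `v ++ x ++ y` inside `u ++ v ++ x ++ y ++ z`. -/
def vxyRange {α : Type} (u v x y : List α) : Set ℕ :=
  Set.Ico u.length (u.length + (v.length + x.length + y.length))

/-- `L` has a pump-sensitive linkage `(P_i, P_j)` on the factorization `Ps = [P₁, …, P_k]`:
for every factorization `u v x y z` of the concatenated word with `|v| + |y| ≥ 1` such that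
the position range of `v x y` intersects the range of segment `i` and is disjoint from that of
segment `j`, or vice versa, the pumped word `u v v x y y z` is not in `L`. -/
def HasPumpSensitiveLinkage {α : Type} (L : Language α) (Ps : List (List α)) (i j : ℕ) : Prop :=
  ∀ u v x y z : List α,
    Ps.flatten = u ++ v ++ x ++ y ++ z →
    1 ≤ v.length + y.length →
    (((vxyRange u v x y ∩ segRange Ps i).Nonempty ∧
        Disjoint (vxyRange u v x y) (segRange Ps j)) ∨
     ((vxyRange u v x y ∩ segRange Ps j).Nonempty ∧
        Disjoint (vxyRange u v x y) (segRange Ps i))) →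
    u ++ v ++ v ++ x ++ y ++ y ++ z ∉ L

namespace CFPump
variable {T : Type} {g : ContextFreeGrammar.{0} T}

inductive PTree (g : ContextFreeGrammar.{0} T) : Type
  | leaf (t : T) : PTree g
  | node (r : ContextFreeRule T g.NT) (cs : List (PTree g)) : PTree g

mutual
def yieldT : PTree g → List T
  | .leaf t => [t]
  | .node _ cs => yieldL cs
def yieldL : List (PTree g) → List T
  | [] => []
  | c :: cs => yieldT c ++ yieldL cs
end

mutual
def sizeT : PTree g → ℕ
  | .leaf _ => 1
  | .node _ cs => 1 + sizeL cs
def sizeL : List (PTree g) → ℕ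
  | [] => 0
  | c :: cs => sizeT c + sizeL cs
end

mutual
def heightT : PTree g → ℕ
  | .leaf _ => 0
  | .node _ cs => 1 + heightL cs
def heightL : List (PTree g) → ℕ
  | [] => 0
  | c :: cs => max (heightT c) (heightL cs)
end

inductive Agrees (g : ContextFreeGrammar.{0} T) : PTree g → Symbol T g.NT → Prop
  | leaf (t : T) : Agrees g (.leaf t) (.terminal t)
  | node (r : ContextFreeRule T g.NT) (cs : List (PTree g)) (hr : r ∈ g.rules)
      (hcs : List.Forall₂ (Agrees g) cs r.output) : Agrees g (.node r cs) (.nonterminal r.input)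

abbrev AgreesL (g : ContextFreeGrammar.{0} T) := List.Forall₂ (Agrees g)

lemma yieldL_append (a b : List (PTree g)) : yieldL (a ++ b) = yieldL a ++ yieldL b := by
  induction a with
  | nil => simp [yieldL]
  | cons c cs ih => simp [yieldL, ih]

lemma sizeL_append (a b : List (PTree g)) : sizeL (a ++ b) = sizeL a + sizeL b := by
  induction a with
  | nil => simp [sizeL]
  | cons c cs ih => simp [sizeL, ih]; omega

lemma sizeT_pos (c : PTree g) : 1 ≤ sizeT c := by
  cases c <;> simp [sizeT]

lemma sizeT_le_sizeL {c : PTree g} {cs : List (PTree g)} (h : c ∈ cs) : sizeT c ≤ sizeL cs := by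
  induction cs with
  | nil => simp at h
  | cons d ds ih =>
    rcases List.mem_cons.1 h with rfl | h
    · simp only [sizeL]; omega
    · have := ih h; simp only [sizeL]; omega

lemma AgreesL.split {cs : List (PTree g)} {ss₁ ss₂} (h : AgreesL g cs (ss₁ ++ ss₂)) :
    ∃ cs₁ cs₂, cs = cs₁ ++ cs₂ ∧ AgreesL g cs₁ ss₁ ∧ AgreesL g cs₂ ss₂ := by
  induction ss₁ generalizing cs with
  | nil => exact ⟨[], cs, rfl, List.Forall₂.nil, by simpa using h⟩
  | cons s ss ih =>
    rcases h with _ | ⟨hc, hcs⟩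
    obtain ⟨cs₁, cs₂, rfl, h₁, h₂⟩ := ih hcs
    exact ⟨_ :: cs₁, cs₂, rfl, List.Forall₂.cons hc h₁, h₂⟩

lemma AgreesL.single {cs : List (PTree g)} {s} (h : AgreesL g cs [s]) :
    ∃ c, cs = [c] ∧ Agrees g c s := by
  rcases h with _ | ⟨hc, hcs⟩
  rcases hcs with _ | _
  exact ⟨_, rfl, hc⟩

/-- Soundness -/
lemma soundL_bounded (N : ℕ)
    (ih : ∀ (c : PTree g) s, sizeT c ≤ N → Agrees g c s →
      g.Derives [s] (List.map Symbol.terminal (yieldT c)))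
    {cs : List (PTree g)} {ss} (hsz : sizeL cs ≤ N) (h : AgreesL g cs ss) :
    g.Derives ss (List.map Symbol.terminal (yieldL cs)) := by
  induction h with
  | nil => exact Relation.ReflTransGen.refl
  | @cons c' s' cs' ss' hc hcs ihl =>
    simp only [yieldL, List.map_append]
    have h1 : g.Derives (s' :: ss') (List.map Symbol.terminal (yieldT c') ++ ss') := by
      have := (ih c' s' (by have := sizeT_pos c'; simp only [sizeL] at hsz; omega) hc).append_right ss'
      simpa using this
    refine h1.trans ?_
    exact (ihl (by simp only [sizeL] at hsz; omega)).append_left _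

lemma sound_aux : ∀ N : ℕ, (∀ (c : PTree g) s, sizeT c ≤ N → Agrees g c s →
    g.Derives [s] (List.map Symbol.terminal (yieldT c))) := by
  intro N
  induction N with
  | zero => intro c s hc _; have := sizeT_pos c; omega
  | succ N ih =>
    intro c s hc ha
    cases ha with
    | leaf t =>
      show g.Derives [Symbol.terminal t] (List.map Symbol.terminal (yieldT (PTree.leaf t)))
      simp only [yieldT, List.map_cons, List.map_nil]
      exact Relation.ReflTransGen.refl
    | node r cs hr hcs =>
      have hstep : g.Produces [Symbol.nonterminal r.input] r.output :=
        ⟨r, hr, ContextFreeRule.Rewrites.input_output⟩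
      refine hstep.trans_derives ?_
      have hsz : sizeL cs ≤ N := by simp only [sizeT] at hc; omega
      exact soundL_bounded N ih hsz hcs

lemma sound {c : PTree g} {s} (h : Agrees g c s) :
    g.Derives [s] (List.map Symbol.terminal (yieldT c)) :=
  sound_aux (sizeT c) c s le_rfl h

lemma soundL {cs : List (PTree g)} {ss} (h : AgreesL g cs ss) :
    g.Derives ss (List.map Symbol.terminal (yieldL cs)) :=
  soundL_bounded (sizeL cs) (fun c s hc ha => sound_aux _ c s hc ha) le_rfl h

/-- Completeness -/
lemma complete {ss : List (Symbol T g.NT)} {w : List T}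
    (h : g.Derives ss (List.map Symbol.terminal w)) :
    ∃ cs, AgreesL g cs ss ∧ yieldL cs = w := by
  induction h using Relation.ReflTransGen.head_induction_on with
  | refl =>
    refine ⟨w.map .leaf, ?_, ?_⟩
    · induction w with
      | nil => exact List.Forall₂.nil
      | cons t ts ih => exact List.Forall₂.cons (Agrees.leaf t) ih
    · induction w with
      | nil => rfl
      | cons t ts ih => simpa [yieldL, yieldT] using ih
  | head hstep _ ih =>
    obtain ⟨cs', hcs', hy⟩ := ih
    obtain ⟨r, hr, hrw⟩ := hstep
    obtain ⟨p, q, hpq, hpq'⟩ := hrw.exists_parts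
    subst hpq hpq'
    obtain ⟨cs₁, cs₂, rfl, h₁, h₂⟩ := AgreesL.split (by simpa using hcs')
    obtain ⟨cso, cs₃, rfl, ho, h₃⟩ := AgreesL.split h₂
    refine ⟨cs₁ ++ [PTree.node r cso] ++ cs₃, ?_, ?_⟩
    · refine List.rel_append (List.rel_append h₁ ?_) h₃
      exact List.Forall₂.cons (Agrees.node r cso hr ho) List.Forall₂.nil
    · simp only [yieldL_append] at hy ⊢
      simpa [yieldL, yieldT] using hy


/-! ### Constants -/

open scoped Classical in
noncomputable def InputSet (g : ContextFreeGrammar.{0} T) : Finset g.NT :=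
  g.rules.image ContextFreeRule.input

noncomputable def K (g : ContextFreeGrammar.{0} T) : ℕ := (InputSet g).card

def M (g : ContextFreeGrammar.{0} T) : ℕ := (g.rules.sup fun r => r.output.length) ⊔ 2

lemma two_le_M : 2 ≤ M g := le_max_right _ _

lemma rhs_le_M {r : ContextFreeRule T g.NT} (hr : r ∈ g.rules) : r.output.length ≤ M g :=
  le_trans (Finset.le_sup (f := fun r => r.output.length) hr) (le_max_left _ _)

lemma root_mem {c : PTree g} {n : g.NT} (h : Agrees g c (.nonterminal n)) : n ∈ InputSet g := by
  cases h with
  | node r cs hr hcs => classical exact Finset.mem_image_of_mem _ hr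

/-! ### Yield length bound -/

lemma yieldL_bound_aux {N : ℕ}
    (ih : ∀ (c : PTree g) s, sizeT c ≤ N → Agrees g c s → (yieldT c).length ≤ M g ^ heightT c)
    {cs : List (PTree g)} {ss} (hsz : sizeL cs ≤ N) (h : AgreesL g cs ss) :
    (yieldL cs).length ≤ cs.length * M g ^ heightL cs := by
  induction h with
  | nil => simp [yieldL]
  | @cons c' s' cs' ss' hc hcs ihl =>
    have hM1 : 1 ≤ M g := le_trans (by norm_num) two_le_M
    have h1 : (yieldT c').length ≤ M g ^ heightT c' :=
      ih c' s' (by have := sizeT_pos c'; simp only [sizeL] at hsz; omega) hc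
    have h2 : (yieldL cs').length ≤ cs'.length * M g ^ heightL cs' :=
      ihl (by simp only [sizeL] at hsz; omega)
    have e1 : M g ^ heightT c' ≤ M g ^ heightL (c' :: cs') :=
      Nat.pow_le_pow_right hM1 (by simp [heightL])
    have e2 : M g ^ heightL cs' ≤ M g ^ heightL (c' :: cs') :=
      Nat.pow_le_pow_right hM1 (by simp [heightL])
    have := Nat.mul_le_mul_left cs'.length e2
    simp only [yieldL, List.length_append, List.length_cons]
    calc (yieldT c').length + (yieldL cs').length
        ≤ M g ^ heightL (c' :: cs') + cs'.length * M g ^ heightL (c' :: cs') := by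
          refine Nat.add_le_add (le_trans h1 e1) (le_trans h2 ?_)
          exact Nat.mul_le_mul_left cs'.length e2
      _ = (cs'.length + 1) * M g ^ heightL (c' :: cs') := by ring

lemma yield_bound_aux : ∀ N : ℕ, ∀ (c : PTree g) s, sizeT c ≤ N → Agrees g c s →
    (yieldT c).length ≤ M g ^ heightT c := by
  intro N
  induction N with
  | zero => intro c s hc _; have := sizeT_pos c; omega
  | succ N ih =>
    intro c s hc ha
    cases ha with
    | leaf t => simp [yieldT, heightT]
    | node r cs hr hcs =>
      have hlen : cs.length = r.output.length := hcs.length_eq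
      have hsz : sizeL cs ≤ N := by simp only [sizeT] at hc; omega
      have h1 := yieldL_bound_aux ih hsz hcs
      have h2 : cs.length ≤ M g := by rw [hlen]; exact rhs_le_M hr
      show (yieldL cs).length ≤ M g ^ heightT (PTree.node r cs)
      simp only [heightT]
      calc (yieldL cs).length ≤ cs.length * M g ^ heightL cs := h1
        _ ≤ M g * M g ^ heightL cs := Nat.mul_le_mul_right _ h2
        _ = M g ^ (1 + heightL cs) := by rw [pow_add, pow_one]

lemma yield_bound {c : PTree g} {s} (h : Agrees g c s) :
    (yieldT c).length ≤ M g ^ heightT c :=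
  yield_bound_aux (sizeT c) c s le_rfl h

/-! ### Contexts -/

def Ctx (g : ContextFreeGrammar.{0} T) (A B : g.NT) (l r : List T) (s : ℕ) : Prop :=
  g.Derives [Symbol.nonterminal A]
    (List.map Symbol.terminal l ++ [Symbol.nonterminal B] ++ List.map Symbol.terminal r) ∧
  ∀ d : PTree g, Agrees g d (.nonterminal B) → ∃ d', Agrees g d' (.nonterminal A) ∧
    yieldT d' = l ++ yieldT d ++ r ∧ sizeT d' = s + sizeT d

lemma Ctx.id (A : g.NT) : Ctx g A A [] [] 0 :=
  ⟨by simpa using Relation.ReflTransGen.refl, fun d hd => ⟨d, hd, by simp, by simp⟩⟩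

lemma Ctx.comp {A B C : g.NT} {l₁ r₁ l₂ r₂ s₁ s₂} (h₁ : Ctx g A B l₁ r₁ s₁)
    (h₂ : Ctx g B C l₂ r₂ s₂) : Ctx g A C (l₁ ++ l₂) (r₂ ++ r₁) (s₁ + s₂) := by
  constructor
  · refine h₁.1.trans ?_
    have := (h₂.1.append_right (List.map Symbol.terminal r₁)).append_left
      (List.map Symbol.terminal l₁)
    simpa [List.append_assoc] using this
  · intro d hd
    obtain ⟨d₂, hd₂, hy₂, hs₂⟩ := h₂.2 d hd
    obtain ⟨d₁, hd₁, hy₁, hs₁⟩ := h₁.2 d₂ hd₂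
    exact ⟨d₁, hd₁, by simp [hy₁, hy₂], by omega⟩

/-! ### Choosing a child of maximal height -/

lemma select_max {cs : List (PTree g)} {ss} (h : AgreesL g cs ss) (hpos : 1 ≤ heightL cs) :
    ∃ cs₁ c₁ cs₂ ss₁ s₁ ss₂, cs = cs₁ ++ c₁ :: cs₂ ∧ ss = ss₁ ++ s₁ :: ss₂ ∧
      AgreesL g cs₁ ss₁ ∧ Agrees g c₁ s₁ ∧ AgreesL g cs₂ ss₂ ∧ heightT c₁ = heightL cs := by
  induction h with
  | nil => simp [heightL] at hpos
  | @cons c' s' cs' ss' hc hcs ihl =>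
    by_cases hcase : heightL cs' ≤ heightT c'
    · refine ⟨[], c', cs', [], s', ss', rfl, rfl, List.Forall₂.nil, hc, hcs, ?_⟩
      simp only [heightL]; omega
    · have h1 : 1 ≤ heightL cs' := by omega
      obtain ⟨cs₁, c₁, cs₂, ss₁, s₁, ss₂, rfl, rfl, h₁, h₂, h₃, h₄⟩ := ihl h1
      refine ⟨c' :: cs₁, c₁, cs₂, s' :: ss₁, s₁, ss₂, rfl, rfl,
        List.Forall₂.cons hc h₁, h₂, h₃, ?_⟩
      simp only [heightL] at hcase ⊢; omega

/-! ### One descent step -/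

lemma step {c : PTree g} {n : g.NT} (ha : Agrees g c (.nonterminal n)) (hh : 2 ≤ heightT c) :
    ∃ (c₁ : PTree g) (n₁ : g.NT) (l r : List T) (s : ℕ),
      Agrees g c₁ (.nonterminal n₁) ∧ heightT c₁ + 1 = heightT c ∧
      Ctx g n n₁ l r s ∧ 1 ≤ s ∧ yieldT c = l ++ yieldT c₁ ++ r ∧ sizeT c = s + sizeT c₁ := by
  cases ha with
  | node r cs hr hcs =>
    have hpos : 1 ≤ heightL cs := by simp only [heightT] at hh; omega
    obtain ⟨cs₁, c₁, cs₂, ss₁, s₁, ss₂, rfl, hout, h₁, h₂, h₃, h₄⟩ := select_max hcs hpos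
    -- c₁ has positive height, so it is a node; its symbol is a nonterminal
    have hc₁pos : 1 ≤ heightT c₁ := h₄ ▸ hpos
    obtain ⟨r', cs', rfl⟩ : ∃ r' cs', c₁ = PTree.node r' cs' := by
      cases c₁ with
      | leaf t => simp [heightT] at hc₁pos
      | node r' cs' => exact ⟨r', cs', rfl⟩
    obtain ⟨n₁, rfl⟩ : ∃ n₁, s₁ = Symbol.nonterminal n₁ := by
      cases h₂ with
      | node => exact ⟨_, rfl⟩
    refine ⟨PTree.node r' cs', n₁, yieldL cs₁, yieldL cs₂, 1 + sizeL cs₁ + sizeL cs₂,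
      h₂, by simp only [heightT] at h₄ ⊢; omega, ⟨?_, ?_⟩, by omega, ?_, ?_⟩
    · -- derivation for the context
      have hstep : g.Produces [Symbol.nonterminal r.input] r.output :=
        ⟨r, hr, ContextFreeRule.Rewrites.input_output⟩
      refine hstep.trans_derives ?_
      rw [hout]
      have d₁ := (soundL h₁).append_right (Symbol.nonterminal n₁ :: ss₂)
      have d₂ := ((soundL h₃).append_left
        (List.map Symbol.terminal (yieldL cs₁) ++ [Symbol.nonterminal n₁]))
      refine Relation.ReflTransGen.trans ?_ (by simpa [List.append_assoc] using d₂)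
      simpa [List.append_assoc] using d₁
    · -- replacement
      intro d hd
      refine ⟨PTree.node r (cs₁ ++ d :: cs₂), ?_, ?_, ?_⟩
      · exact Agrees.node r _ hr (hout ▸ List.rel_append h₁ (List.Forall₂.cons hd h₃))
      · show yieldL (cs₁ ++ d :: cs₂) = yieldL cs₁ ++ yieldT d ++ yieldL cs₂
        rw [show (cs₁ ++ d :: cs₂) = cs₁ ++ [d] ++ cs₂ by simp]
        simp [yieldL_append, yieldL]
      · show 1 + sizeL (cs₁ ++ d :: cs₂) = 1 + sizeL cs₁ + sizeL cs₂ + sizeT d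
        rw [show (cs₁ ++ d :: cs₂) = cs₁ ++ [d] ++ cs₂ by simp]
        simp [sizeL_append, sizeL]; omega
    · show yieldL (cs₁ ++ PTree.node r' cs' :: cs₂) = _
      rw [show (cs₁ ++ PTree.node r' cs' :: cs₂) = cs₁ ++ [PTree.node r' cs'] ++ cs₂ by simp]
      simp [yieldL_append, yieldL]
    · show 1 + sizeL (cs₁ ++ PTree.node r' cs' :: cs₂) = _
      rw [show (cs₁ ++ PTree.node r' cs' :: cs₂) = cs₁ ++ [PTree.node r' cs'] ++ cs₂ by simp]
      simp [sizeL_append, sizeL]; omega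


/-! ### Descending to a subtree of prescribed height -/

lemma descend (H : ℕ) (hH : 1 ≤ H) : ∀ k (c : PTree g) (n : g.NT), heightT c = H + k →
    Agrees g c (.nonterminal n) →
    ∃ (c' : PTree g) (n' : g.NT) (l r : List T) (s : ℕ),
      Agrees g c' (.nonterminal n') ∧ heightT c' = H ∧ Ctx g n n' l r s ∧
      yieldT c = l ++ yieldT c' ++ r ∧ sizeT c = s + sizeT c' := by
  intro k
  induction k with
  | zero =>
    intro c n hh ha
    exact ⟨c, n, [], [], 0, ha, by omega, Ctx.id n, by simp, by simp⟩
  | succ k ih =>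
    intro c n hh ha
    have hc : 1 ≤ heightT c := by
      cases ha with
      | node r cs hr hcs => simp only [heightT]; omega
    have h2 : 2 ≤ heightT c := by omega
    obtain ⟨c₁, n₁, l, r, s, ha₁, hh₁, hctx, hs1, hy, hsz⟩ := step ha h2
    obtain ⟨c', n', l', r', s', ha', hh', hctx', hy', hsz'⟩ := ih c₁ n₁ (by omega) ha₁
    refine ⟨c', n', l ++ l', r' ++ r, s + s', ha', hh', hctx.comp hctx', ?_, by omega⟩
    simp [hy, hy', List.append_assoc]

/-! ### Pigeonhole descent: finding a repeated nonterminal -/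

lemma claim (H : ℕ) (cstar : PTree g) (nstar : g.NT) :
    ∀ k (c : PTree g) (n : g.NT) (V : Finset g.NT), heightT c = k →
    Agrees g c (.nonterminal n) → V ⊆ InputSet g →
    K g + 1 ≤ V.card + heightT c → heightT c ≤ H →
    (∃ l₀ r₀ s₀, Ctx g nstar n l₀ r₀ s₀ ∧ yieldT cstar = l₀ ++ yieldT c ++ r₀ ∧
      sizeT cstar = s₀ + sizeT c) →
    (∀ A ∈ V, ∃ (cA : PTree g), ∃ lA rA sA l r s, Agrees g cA (.nonterminal A) ∧ heightT cA ≤ H ∧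
        Ctx g nstar A lA rA sA ∧ yieldT cstar = lA ++ yieldT cA ++ rA ∧
        sizeT cstar = sA + sizeT cA ∧
        Ctx g A n l r s ∧ 1 ≤ s ∧ yieldT cA = l ++ yieldT c ++ r ∧ sizeT cA = s + sizeT c) →
    ∃ A l₁ r₁ s₁ l₂ r₂ s₂, ∃ (cA cB : PTree g),
      Ctx g nstar A l₁ r₁ s₁ ∧ Ctx g A A l₂ r₂ s₂ ∧ 1 ≤ s₂ ∧
      Agrees g cA (.nonterminal A) ∧ Agrees g cB (.nonterminal A) ∧ heightT cA ≤ H ∧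
      yieldT cstar = l₁ ++ yieldT cA ++ r₁ ∧ sizeT cstar = s₁ + sizeT cA ∧
      yieldT cA = l₂ ++ yieldT cB ++ r₂ ∧ sizeT cA = s₂ + sizeT cB := by
  intro k
  induction k using Nat.strong_induction_on with
  | _ k ih =>
    rintro c n V hk ha hV hcard hH ⟨l₀, r₀, s₀, hrt, hrty, hrts⟩ hinv
    by_cases hmem : n ∈ V
    · obtain ⟨cA, lA, rA, sA, l, r, s, h1, h2, h3, h4, h5, h6, h7, h8, h9⟩ := hinv n hmem
      exact ⟨n, lA, rA, sA, l, r, s, cA, c, h3, h6, h7, h1, ha, h2, h4, h5, h8, h9⟩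
    · have hnmem : n ∈ InputSet g := root_mem ha
      have hcard2 : V.card + 1 ≤ K g := by
        classical
        have : insert n V ⊆ InputSet g := Finset.insert_subset hnmem hV
        have := Finset.card_le_card this
        rwa [Finset.card_insert_of_notMem hmem] at this
      have h2 : 2 ≤ heightT c := by omega
      obtain ⟨c₁, n₁, l, r, s, ha₁, hh₁, hctx, hs1, hy, hsz⟩ := step ha h2
      classical
      refine ih (heightT c₁) (by omega) c₁ n₁ (insert n V) rfl ha₁
        (Finset.insert_subset hnmem hV) ?_ (by omega) ?_ ?_
      · rw [Finset.card_insert_of_notMem hmem]; omega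
      · exact ⟨l₀ ++ l, r ++ r₀, s₀ + s, hrt.comp hctx,
          by simp [hrty, hy, List.append_assoc], by omega⟩
      · intro A hA
        rcases Finset.mem_insert.1 hA with rfl | hA
        · exact ⟨c, l₀, r₀, s₀, l, r, s, ha, by omega, hrt, hrty, hrts, hctx, hs1, hy, hsz⟩
        · obtain ⟨cA, lA, rA, sA, l', r', s', h1, h2', h3, h4, h5, h6, h7, h8, h9⟩ := hinv A hA
          exact ⟨cA, lA, rA, sA, l' ++ l, r ++ r', s' + s, h1, h2', h3, h4, h5, h6.comp hctx,
            by omega, by simp [h8, hy, List.append_assoc], by omega⟩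

/-! ### The main pumping construction -/

lemma pump_main : ∀ N : ℕ, ∀ (c : PTree g) (n : g.NT), sizeT c ≤ N →
    Agrees g c (.nonterminal n) → M g ^ K g < (yieldT c).length →
    ∃ u v x y z A, yieldT c = u ++ v ++ x ++ y ++ z ∧ 1 ≤ v.length + y.length ∧
      v.length + x.length + y.length ≤ M g ^ (K g + 1) ∧
      g.Derives [Symbol.nonterminal n]
        (List.map Symbol.terminal u ++ [Symbol.nonterminal A] ++ List.map Symbol.terminal z) ∧
      g.Derives [Symbol.nonterminal A]
        (List.map Symbol.terminal v ++ [Symbol.nonterminal A] ++ List.map Symbol.terminal y) ∧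
      g.Derives [Symbol.nonterminal A] (List.map Symbol.terminal x) := by
  intro N
  induction N with
  | zero => intro c n hsz _ _; have := sizeT_pos c; omega
  | succ N ihN =>
    intro c n hsz ha hlen
    have hM1 : 1 ≤ M g := le_trans (by norm_num) two_le_M
    have hbd := yield_bound ha
    have hht : K g < heightT c := by
      by_contra hcon
      push_neg at hcon
      have := Nat.pow_le_pow_right hM1 hcon
      omega
    obtain ⟨k, hk⟩ : ∃ k, heightT c = (K g + 1) + k := ⟨heightT c - (K g + 1), by omega⟩
    obtain ⟨cst, nst, L0, R0, S0, hast, hhst, hctx0, hy0, hs0⟩ :=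
      descend (K g + 1) (by omega) k c n hk ha
    obtain ⟨A, l₁, r₁, s₁, l₂, r₂, s₂, cA, cB, hc1, hc2, hs₂, haA, haB, hhA, hy1, hs1, hy2, hs2⟩ :=
      claim (K g + 1) cst nst (K g + 1) cst nst ∅ hhst hast
        (Finset.empty_subset _) (by simp [hhst]) (by omega)
        ⟨[], [], 0, Ctx.id nst, by simp, by simp⟩ (by simp)
    by_cases hvy : l₂ = [] ∧ r₂ = []
    · -- trivial pump: replace the outer subtree by the inner one and recurse
      obtain ⟨rfl, rfl⟩ := hvy
      obtain ⟨d, had, hyd, hsd⟩ := hc1.2 cB haB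
      obtain ⟨d', had', hyd', hsd'⟩ := hctx0.2 d had
      have hyeq : yieldT d' = yieldT c := by
        rw [hyd', hyd, hy0, hy1, hy2]
        simp [List.append_assoc]
      have hszd' : sizeT d' ≤ N := by
        have hBA : sizeT cB < sizeT cA := by omega
        omega
      obtain ⟨u, v, x, y, z, A', e1, e2, e3, e4, e5, e6⟩ :=
        ihN d' n hszd' had' (by rw [hyeq]; exact hlen)
      exact ⟨u, v, x, y, z, A', by rw [← hyeq]; exact e1, e2, e3, e4, e5, e6⟩
    · -- nontrivial pump
      have hvylen : 1 ≤ l₂.length + r₂.length := by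
        rcases l₂ with _ | ⟨a, l₂'⟩
        · rcases r₂ with _ | ⟨b, r₂'⟩
          · exact absurd ⟨rfl, rfl⟩ hvy
          · simp
        · simp; omega
      refine ⟨L0 ++ l₁, l₂, yieldT cB, r₂, r₁ ++ R0, A, ?_, by simpa using hvylen, ?_, ?_,
        hc2.1, sound haB⟩
      · rw [hy0, hy1, hy2]; simp [List.append_assoc]
      · have : l₂.length + (yieldT cB).length + r₂.length = (yieldT cA).length := by
          rw [hy2]; simp; omega
        rw [this]
        calc (yieldT cA).length ≤ M g ^ heightT cA := yield_bound haA
          _ ≤ M g ^ (K g + 1) := Nat.pow_le_pow_right hM1 hhA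
      · have := (hctx0.comp hc1).1
        simpa [List.append_assoc] using this

lemma derives_sandwich {p q a b : List (Symbol T g.NT)} (h : g.Derives a b) :
    g.Derives (p ++ a ++ q) (p ++ b ++ q) := by
  have := (h.append_right q).append_left p
  simpa [List.append_assoc] using this

/-- Pumping (with exponent 2) for context-free grammars. -/
lemma cf_pumping {w : List T} (hw : w ∈ g.language) (hlen : M g ^ K g < w.length) :
    ∃ u v x y z : List T, w = u ++ v ++ x ++ y ++ z ∧ 1 ≤ v.length + y.length ∧
      v.length + x.length + y.length ≤ M g ^ (K g + 1) ∧
      u ++ v ++ v ++ x ++ y ++ y ++ z ∈ g.language := by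
  rw [ContextFreeGrammar.mem_language_iff] at hw
  obtain ⟨cs, hcs, hy⟩ := complete hw
  obtain ⟨c, rfl, hc⟩ := AgreesL.single hcs
  have hyc : yieldT c = w := by simpa [yieldL] using hy
  obtain ⟨u, v, x, y, z, A, e1, e2, e3, e4, e5, e6⟩ :=
    pump_main (sizeT c) c g.initial le_rfl hc (by rw [hyc]; exact hlen)
  refine ⟨u, v, x, y, z, by rw [← hyc, e1], e2, e3, ?_⟩
  rw [ContextFreeGrammar.mem_language_iff]
  have s2 : g.Derives
      (List.map Symbol.terminal u ++ [Symbol.nonterminal A] ++ List.map Symbol.terminal z)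
      (List.map Symbol.terminal u ++ (List.map Symbol.terminal v ++ [Symbol.nonterminal A] ++
        List.map Symbol.terminal y) ++ List.map Symbol.terminal z) :=
    derives_sandwich e5
  have s3 : g.Derives
      (List.map Symbol.terminal u ++ (List.map Symbol.terminal v ++ [Symbol.nonterminal A] ++
        List.map Symbol.terminal y) ++ List.map Symbol.terminal z)
      (List.map Symbol.terminal u ++ (List.map Symbol.terminal v ++ (List.map Symbol.terminal v ++
        [Symbol.nonterminal A] ++ List.map Symbol.terminal y) ++
        List.map Symbol.terminal y) ++ List.map Symbol.terminal z) := by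
    have := derives_sandwich (g := g)
      (p := List.map Symbol.terminal u ++ List.map Symbol.terminal v)
      (q := List.map Symbol.terminal y ++ List.map Symbol.terminal z) e5
    simpa [List.append_assoc] using this
  have s4 : g.Derives
      (List.map Symbol.terminal u ++ (List.map Symbol.terminal v ++ (List.map Symbol.terminal v ++
        [Symbol.nonterminal A] ++ List.map Symbol.terminal y) ++
        List.map Symbol.terminal y) ++ List.map Symbol.terminal z)
      (List.map Symbol.terminal (u ++ v ++ v ++ x ++ y ++ y ++ z)) := by
    have := derives_sandwich (g := g)
      (p := List.map Symbol.terminal u ++ List.map Symbol.terminal v ++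
        List.map Symbol.terminal v)
      (q := List.map Symbol.terminal y ++ List.map Symbol.terminal y ++
        List.map Symbol.terminal z) e6
    simpa [List.append_assoc] using this
  exact ((e4.trans s2).trans s3).trans s4
end CFPump

/-- Strengthened crossing linkage theorem: if for every `n` the language `L` contains a word
`P₁P₂P₃P₄` with `|P₂| ≥ 1`, `|P₃| ≥ 1`, `max(|P₂|, |P₃|) ≥ n`, carrying pump-sensitive
linkages `(P₁, P₃)` and `(P₂, P₄)`, then `L` is not context-free. -/

theorem strengthened_crossing_linkages_not_contextFree {α : Type} (L : Language α)
    (h : ∀ n : ℕ, ∃ P₁ P₂ P₃ P₄ : List α,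
      P₁ ++ P₂ ++ P₃ ++ P₄ ∈ L ∧
      (1 ≤ P₂.length ∧ 1 ≤ P₃.length ∧ n ≤ max P₂.length P₃.length) ∧
      HasPumpSensitiveLinkage L [P₁, P₂, P₃, P₄] 0 2 ∧
      HasPumpSensitiveLinkage L [P₁, P₂, P₃, P₄] 1 3) :
    ¬ L.IsContextFree := by
  rintro ⟨g, rfl⟩
  obtain ⟨P₁, P₂, P₃, P₄, hw, ⟨hp2, hp3, hmax⟩, link02, link13⟩ :=
    h (CFPump.M g ^ (CFPump.K g + 1))
  have hM1 : 1 ≤ CFPump.M g := le_trans (by norm_num) CFPump.two_le_M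
  have hp0 : 0 < CFPump.M g ^ CFPump.K g := pow_pos (by omega) _
  have hps : CFPump.M g ^ CFPump.K g * 2 ≤ CFPump.M g ^ (CFPump.K g + 1) := by
    rw [pow_succ]; exact Nat.mul_le_mul_left _ CFPump.two_le_M
  set w : List α := P₁ ++ P₂ ++ P₃ ++ P₄ with hwdef
  have hwlen : w.length = P₁.length + P₂.length + P₃.length + P₄.length := by
    simp [hwdef]; omega
  have hmaxle : max P₂.length P₃.length ≤ w.length := by
    rw [hwlen]; omega
  have hlen : CFPump.M g ^ CFPump.K g < w.length := by omega
  obtain ⟨u, v, x, y, z, hweq, hvy, hvxy, hpump⟩ := CFPump.cf_pumping hw hlen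
  -- abbreviations for the arithmetic
  have hlensum : P₁.length + P₂.length + P₃.length + P₄.length
      = u.length + (v.length + x.length + y.length) + z.length := by
    have := congrArg List.length hweq
    simp at this
    omega
  have hweq' : P₁ ++ P₂ ++ P₃ ++ P₄ = u ++ v ++ x ++ y ++ z := hweq
  have hfl : ([P₁, P₂, P₃, P₄] : List (List α)).flatten = u ++ v ++ x ++ y ++ z := by
    simpa [List.append_assoc] using hweq'
  have hvxy2 : v.length + x.length + y.length ≤ P₂.length + P₃.length := by
    have : max P₂.length P₃.length ≤ P₂.length + P₃.length := by omega
    omega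
  set a := u.length
  set len := v.length + x.length + y.length with hlendef
  have hlen1 : 1 ≤ len := by omega
  -- segment boundaries
  have hseg0 : segStart [P₁, P₂, P₃, P₄] 0 = 0 := by simp [segStart]
  have hseg1 : segStart [P₁, P₂, P₃, P₄] 1 = P₁.length := by simp [segStart]
  have hseg2 : segStart [P₁, P₂, P₃, P₄] 2 = P₁.length + P₂.length := by simp [segStart]
  have hseg3 : segStart [P₁, P₂, P₃, P₄] 3 = P₁.length + P₂.length + P₃.length := by
    simp [segStart]; omega
  have hget0 : ([P₁, P₂, P₃, P₄].getD 0 []) = P₁ := rfl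
  have hget1 : ([P₁, P₂, P₃, P₄].getD 1 []) = P₂ := rfl
  have hget2 : ([P₁, P₂, P₃, P₄].getD 2 []) = P₃ := rfl
  have hget3 : ([P₁, P₂, P₃, P₄].getD 3 []) = P₄ := rfl
  have hW : vxyRange u v x y = Set.Ico a (a + len) := rfl
  have hR : ∀ i, segRange [P₁, P₂, P₃, P₄] i =
      Set.Ico (segStart [P₁, P₂, P₃, P₄] i)
        (segStart [P₁, P₂, P₃, P₄] i + ([P₁, P₂, P₃, P₄].getD i []).length) := fun _ => rfl
  by_cases hc1 : a + len ≤ P₁.length + P₂.length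
  · by_cases hc1a : a < P₁.length
    · -- intersects seg 0, disjoint from seg 2
      refine link02 u v x y z hfl hvy (Or.inl ⟨⟨a, ?_, ?_⟩, ?_⟩) hpump
      · rw [hW]; simp only [Set.mem_Ico]; omega
      · rw [hR 0, hseg0, hget0]; simp only [Set.mem_Ico]; omega
      · rw [hW, hR 2, hseg2, hget2, Set.Ico_disjoint_Ico]
        simp only [inf_le_iff, le_sup_iff]
        omega
    · -- intersects seg 1, disjoint from seg 3
      refine link13 u v x y z hfl hvy (Or.inl ⟨⟨a, ?_, ?_⟩, ?_⟩) hpump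
      · rw [hW]; simp only [Set.mem_Ico]; omega
      · rw [hR 1, hseg1, hget1]; simp only [Set.mem_Ico]; omega
      · rw [hW, hR 3, hseg3, hget3, Set.Ico_disjoint_Ico]
        simp only [inf_le_iff, le_sup_iff]
        omega
  · by_cases hc2a : P₁.length + P₂.length + P₃.length ≤ a
    · -- intersects seg 3, disjoint from seg 1
      refine link13 u v x y z hfl hvy (Or.inr ⟨⟨a, ?_, ?_⟩, ?_⟩) hpump
      · rw [hW]; simp only [Set.mem_Ico]; omega
      · rw [hR 3, hseg3, hget3]; simp only [Set.mem_Ico]; omega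
      · rw [hW, hR 1, hseg1, hget1, Set.Ico_disjoint_Ico]
        simp only [inf_le_iff, le_sup_iff]
        omega
    · by_cases hc2b : P₁.length ≤ a
      · -- intersects seg 2, disjoint from seg 0
        refine link02 u v x y z hfl hvy (Or.inr ⟨⟨max a (P₁.length + P₂.length), ?_, ?_⟩, ?_⟩)
          hpump
        · rw [hW]; simp only [Set.mem_Ico]; omega
        · rw [hR 2, hseg2, hget2]; simp only [Set.mem_Ico]; omega
        · rw [hW, hR 0, hseg0, hget0, Set.Ico_disjoint_Ico]
          simp only [inf_le_iff, le_sup_iff]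
          omega
      · -- intersects seg 1, disjoint from seg 3
        refine link13 u v x y z hfl hvy (Or.inl ⟨⟨P₁.length, ?_, ?_⟩, ?_⟩) hpump
        · rw [hW]; simp only [Set.mem_Ico]; omega
        · rw [hR 1, hseg1, hget1]; simp only [Set.mem_Ico]; omega
        · rw [hW, hR 3, hseg3, hget3, Set.Ico_disjoint_Ico]
          simp only [inf_le_iff, le_sup_iff]
          omega
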